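/- The rank-one Dunkl kernel satisfies the Gaussian integral identity ∫_ℝ E_k(x, y) e^{-x²/2} |x|^{2k} dx = 2^{k+1/2} c_k^{-1} e^{y²/2} for every real y, where c_k = (∫_ℝ e^{-x²} |x|^{2k} dx)^{-1}. -/

import Mathlib

/-!
Expanding `E_k(x, y)` in powers of `x`, the odd powers integrate to zero against the even weight
`e^{-x²/2}|x|^{2k}`, while the even moments are
`∫ x^{2n} e^{-x²/2}|x|^{2k} dx = 2^{n+k+1/2} Γ(n+k+1/2)`. These Gamma factors cancel those of
the Bessel coefficients, leaving
`2^{k+1/2} Γ(k+1/2) Σ (y²/2)^n / n! = 2^{k+1/2} Γ(k+1/2) e^{y²/2}`, and `c_k⁻¹ = Γ(k+1/2)`.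
Termwise integration is justified by the summability of the `L¹` norms of the terms; the odd
ones are dominated by even moments through `|x|^{2n+1} ≤ 1 + x^{2n+2}`.
-/

open MeasureTheory Real

/-- `j_α(it)`: the normalized Bessel function evaluated at a purely imaginary argument,
`j_α(it) = Γ(α+1) Σ_{n≥0} (t/2)^{2n} / (n! Γ(n+α+1))`. -/
noncomputable def besselI (α t : ℝ) : ℝ :=
  Real.Gamma (α + 1) *
    ∑' n : ℕ, (t / 2) ^ (2 * n) / ((n.factorial : ℝ) * Real.Gamma ((n : ℝ) + α + 1))

/-- The rank-one Dunkl kernel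
`E_k(x,y) = j_{k-1/2}(ixy) + (xy/(2k+1)) j_{k+1/2}(ixy)`. -/
noncomputable def dunklKernel (k x y : ℝ) : ℝ :=
  besselI (k - 1/2) (x * y) + (x * y) / (2 * k + 1) * besselI (k + 1/2) (x * y)

/-- The normalizing constant `c_k = (∫_ℝ e^{-x²}|x|^{2k}dx)⁻¹`. -/
noncomputable def ck (k : ℝ) : ℝ :=
  (∫ x : ℝ, Real.exp (-x ^ 2) * |x| ^ (2 * k))⁻¹

open Set

theorem Function.Odd.integral_eq_zero {G E : Type*} [MeasurableSpace G] [AddGroup G]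
    [MeasurableNeg G] [NormedAddCommGroup E] [NormedSpace ℝ E] {μ : Measure G}
    [μ.IsNegInvariant] {f : G → E} (hf : f.Odd) : ∫ x, f x ∂μ = 0 := by
  have h := integral_neg_eq_self f μ
  simp only [hf.eq, integral_neg] at h
  have h2 : (2 : ℝ) • ∫ x, f x ∂μ = 0 := by
    rw [two_smul]
    nth_rw 1 [← h]
    exact neg_add_cancel _
  exact (smul_eq_zero.mp h2).resolve_left two_ne_zero

theorem integrable_comp_abs_of_integrableOn_Ioi {E : Type*} [NormedAddCommGroup E] {f : ℝ → E}
    (hf : IntegrableOn f (Ioi 0)) : Integrable fun x => f |x| := by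
  have h_pos : IntegrableOn (fun x => f |x|) (Ioi 0) :=
    hf.congr_fun (fun x hx => by rw [abs_of_pos hx]) measurableSet_Ioi
  have h_neg : IntegrableOn (fun x => f |x|) (Iio 0) :=
    (IntegrableOn.comp_neg_Iio (f := f) (c := 0) (by rwa [neg_zero])).congr_fun
      (fun x hx => by rw [abs_of_neg hx]) measurableSet_Iio
  rw [← integrableOn_univ, ← Iio_union_Ici, integrableOn_union]
  exact ⟨h_neg, (integrableOn_Ici_iff_integrableOn_Ioi enorm_ne_top).mpr h_pos⟩

theorem integrable_abs_rpow_mul_exp_neg_mul_sq {b q : ℝ} (hb : 0 < b) (hq : -1 < q) :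
    Integrable fun x : ℝ => |x| ^ q * exp (-b * x ^ 2) := by
  simpa only [sq_abs] using
    integrable_comp_abs_of_integrableOn_Ioi (integrableOn_rpow_mul_exp_neg_mul_sq hb hq)

theorem integral_abs_rpow_mul_exp_neg_mul_sq {b q : ℝ} (hb : 0 < b) (hq : -1 < q) :
    ∫ x : ℝ, |x| ^ q * exp (-b * x ^ 2) = b ^ (-(q + 1) / 2) * Gamma ((q + 1) / 2) := by
  have h := integral_rpow_mul_exp_neg_mul_rpow two_pos hq hb
  simp only [rpow_two] at h
  have h' := integral_comp_abs (f := fun t : ℝ => t ^ q * exp (-b * t ^ 2))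
  simp only [sq_abs] at h'
  rw [h', h]
  ring

theorem inv_ck {k : ℝ} (hk : -1/2 < k) : (ck k)⁻¹ = Gamma (k + 1/2) := by
  have h := integral_abs_rpow_mul_exp_neg_mul_sq one_pos (q := 2 * k) (by linarith)
  simp only [neg_one_mul, one_rpow, one_mul] at h
  rw [ck, inv_inv]
  simp_rw [mul_comm (exp _)]
  rw [h]
  ring_nf

noncomputable def dunklWeight (k x : ℝ) : ℝ := exp (-x ^ 2 / 2) * |x| ^ (2 * k)

theorem dunklWeight_nonneg (k x : ℝ) : 0 ≤ dunklWeight k x := by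
  unfold dunklWeight; positivity

theorem dunklWeight_neg (k x : ℝ) : dunklWeight k (-x) = dunklWeight k x := by
  simp only [dunklWeight, neg_sq, abs_neg]

section DunklWeight

variable {k : ℝ}

theorem abs_pow_mul_dunklWeight (m : ℕ) {x : ℝ} (hx : x ≠ 0) :
    |x| ^ m * dunklWeight k x = |x| ^ ((m : ℝ) + 2 * k) * exp (-2⁻¹ * x ^ 2) := by
  rw [dunklWeight, rpow_add (abs_pos.mpr hx), rpow_natCast]
  ring_nf

theorem integrable_pow_mul_dunklWeight (hk : -1/2 < k) (m : ℕ) :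
    Integrable fun x => x ^ m * dunklWeight k x := by
  refine (integrable_abs_rpow_mul_exp_neg_mul_sq (b := 2⁻¹) (q := m + 2 * k) (by norm_num)
    (by linarith [m.cast_nonneg (α := ℝ)])).mono' ?_ ?_
  · unfold dunklWeight
    fun_prop
  · filter_upwards [Measure.ae_ne volume 0] with x hx
    rw [norm_mul, norm_pow, norm_eq_abs, norm_of_nonneg (dunklWeight_nonneg k x),
      abs_pow_mul_dunklWeight m hx]

theorem integral_pow_two_mul_mul_dunklWeight (hk : -1/2 < k) (n : ℕ) :
    ∫ x, x ^ (2 * n) * dunklWeight k x = 2 ^ ((n : ℝ) + k + 1/2) * Gamma (n + k + 1/2) := by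
  have h := integral_abs_rpow_mul_exp_neg_mul_sq (b := 2⁻¹) (q := (2 * n : ℕ) + 2 * k)
    (by norm_num) (by push_cast; linarith [n.cast_nonneg (α := ℝ)])
  have hq : ((((2 * n : ℕ) : ℝ) + 2 * k) + 1) / 2 = n + k + 1/2 := by push_cast; ring
  rw [hq, neg_div, hq, inv_rpow zero_le_two, rpow_neg zero_le_two, inv_inv] at h
  rw [← h]
  refine integral_congr_ae ?_
  filter_upwards [Measure.ae_ne volume 0] with x hx
  rw [← abs_pow_mul_dunklWeight _ hx, (even_two_mul n).pow_abs]

end DunklWeight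

theorem integral_pow_two_mul_add_one_mul_dunklWeight (k : ℝ) (n : ℕ) :
    ∫ x, x ^ (2 * n + 1) * dunklWeight k x = 0 :=
  Function.Odd.integral_eq_zero fun x => by
    rw [dunklWeight_neg, Odd.neg_pow ⟨n, rfl⟩, neg_mul]

theorem Real.Gamma_mul_pow_le_Gamma_nat_add {c : ℝ} (hc : 0 < c) (n : ℕ) :
    Gamma c * c ^ n ≤ Gamma (n + c) := by
  induction n with
  | zero => simp
  | succ n ih =>
    have hnc : c ≤ n + c := le_add_of_nonneg_left n.cast_nonneg
    calc Gamma c * c ^ (n + 1) = c * (Gamma c * c ^ n) := by ring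
      _ ≤ (n + c) * Gamma (n + c) := by gcongr
      _ = Gamma ((n + 1 : ℕ) + c) := by
        rw [Nat.cast_succ, add_right_comm, Gamma_add_one (by positivity)]

noncomputable def besselTerm (α t : ℝ) (n : ℕ) : ℝ :=
  Gamma (α + 1) * ((t / 2) ^ (2 * n) / ((n.factorial : ℝ) * Gamma ((n : ℝ) + α + 1)))

theorem besselTerm_mul_left (α x t : ℝ) (n : ℕ) :
    besselTerm α (x * t) n = x ^ (2 * n) * besselTerm α t n := by
  simp only [besselTerm, mul_div_assoc, mul_pow]
  ring

section BesselTerm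

variable {α : ℝ}

theorem besselTerm_nonneg (hα : -1 < α) (t : ℝ) (n : ℕ) : 0 ≤ besselTerm α t n := by
  have hn : 0 < (n : ℝ) + α + 1 := by linarith [n.cast_nonneg (α := ℝ)]
  have h1 : 0 < α + 1 := by linarith
  rw [besselTerm, pow_mul]
  positivity

theorem besselTerm_le (hα : -1 < α) (t : ℝ) (n : ℕ) :
    besselTerm α t n ≤ ((t / 2) ^ 2 / (α + 1)) ^ n / n.factorial := by
  have hc : 0 < α + 1 := by linarith
  have hΓ := Gamma_mul_pow_le_Gamma_nat_add hc n
  set s := (t / 2) ^ 2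
  rw [besselTerm, pow_mul, add_assoc]
  calc Gamma (α + 1) * (s ^ n / (n.factorial * Gamma (n + (α + 1))))
      = s ^ n / n.factorial * (Gamma (α + 1) / Gamma (n + (α + 1))) := by ring
    _ ≤ s ^ n / n.factorial * (1 / (α + 1) ^ n) := by
      refine mul_le_mul_of_nonneg_left ?_ (by positivity)
      rw [div_le_div_iff₀ (Gamma_pos_of_pos (add_pos_of_nonneg_of_pos n.cast_nonneg hc))
        (by positivity)]
      linarith
    _ = (s / (α + 1)) ^ n / n.factorial := by rw [div_pow]; ring

theorem summable_besselTerm (hα : -1 < α) (t : ℝ) : Summable (besselTerm α t) :=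
  (summable_pow_div_factorial _).of_nonneg_of_le (besselTerm_nonneg hα t) (besselTerm_le hα t)

theorem hasSum_besselTerm (hα : -1 < α) (t : ℝ) : HasSum (besselTerm α t) (besselI α t) := by
  rw [besselI, ← tsum_mul_left]
  exact (summable_besselTerm hα t).hasSum

theorem besselTerm_mul_two_rpow_mul_Gamma (hα : -1 < α) (t : ℝ) (n : ℕ) :
    besselTerm α t n * (2 ^ ((n : ℝ) + α + 1) * Gamma (n + α + 1))
      = 2 ^ (α + 1) * Gamma (α + 1) * ((t ^ 2 / 2) ^ n / n.factorial) := by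
  have hn : 0 < (n : ℝ) + α + 1 := by linarith [n.cast_nonneg (α := ℝ)]
  have hpow : (t / 2) ^ (2 * n) = (t ^ 2 / 2) ^ n / 2 ^ n := by
    rw [pow_mul, div_pow, div_pow, div_pow, div_div, ← mul_pow]
    norm_num
  rw [besselTerm, hpow, add_assoc, rpow_add two_pos, rpow_natCast, ← add_assoc]
  field_simp

end BesselTerm

theorem pow_le_one_add_pow_succ {a : ℝ} (ha : 0 ≤ a) (m : ℕ) : a ^ m ≤ 1 + a ^ (m + 1) := by
  rcases le_total a 1 with h | h
  · linarith [pow_le_one₀ ha h (n := m), pow_nonneg ha (m + 1)]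
  · linarith [pow_le_pow_right₀ h (Nat.le_add_right m 1)]

noncomputable def dunklTerm (k x y : ℝ) (n : ℕ) : ℝ :=
  besselTerm (k - 1/2) (x * y) n + x * y / (2 * k + 1) * besselTerm (k + 1/2) (x * y) n

theorem dunklTerm_eq (k x y : ℝ) (n : ℕ) :
    dunklTerm k x y n = besselTerm (k - 1/2) y n * x ^ (2 * n)
      + y / (2 * k + 1) * besselTerm (k + 1/2) y n * x ^ (2 * n + 1) := by
  rw [dunklTerm, besselTerm_mul_left, besselTerm_mul_left]
  ring

theorem dunklTerm_mul_dunklWeight (k x y : ℝ) (n : ℕ) :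
    dunklTerm k x y n * dunklWeight k x
      = besselTerm (k - 1/2) y n * (x ^ (2 * n) * dunklWeight k x)
        + y / (2 * k + 1) * besselTerm (k + 1/2) y n * (x ^ (2 * n + 1) * dunklWeight k x) := by
  rw [dunklTerm_eq]
  ring

section DunklTerm

variable {k : ℝ}

theorem hasSum_dunklTerm (hk : -1/2 < k) (x y : ℝ) :
    HasSum (dunklTerm k x y) (dunklKernel k x y) :=
  (hasSum_besselTerm (by linarith) _).add ((hasSum_besselTerm (by linarith) _).mul_left _)

theorem besselTerm_sub_half_mul_integral_pow_two_mul_mul_dunklWeight (hk : -1/2 < k) (y : ℝ)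
    (n : ℕ) :
    besselTerm (k - 1/2) y n * ∫ x, x ^ (2 * n) * dunklWeight k x
      = 2 ^ (k + 1/2) * Gamma (k + 1/2) * ((y ^ 2 / 2) ^ n / n.factorial) := by
  have h := besselTerm_mul_two_rpow_mul_Gamma (α := k - 1/2) (by linarith) y n
  rwa [show (n : ℝ) + (k - 1/2) + 1 = n + k + 1/2 by ring, show k - 1/2 + 1 = k + 1/2 by ring,
    ← integral_pow_two_mul_mul_dunklWeight hk] at h

theorem besselTerm_add_half_mul_integral_pow_two_mul_succ_mul_dunklWeight (hk : -1/2 < k) (y : ℝ)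
    (n : ℕ) :
    besselTerm (k + 1/2) y n * ∫ x, x ^ (2 * (n + 1)) * dunklWeight k x
      = 2 ^ (k + 3/2) * Gamma (k + 3/2) * ((y ^ 2 / 2) ^ n / n.factorial) := by
  have h := besselTerm_mul_two_rpow_mul_Gamma (α := k + 1/2) (by linarith) y n
  rwa [show (n : ℝ) + (k + 1/2) + 1 = (n + 1 : ℕ) + k + 1/2 by push_cast; ring,
    show k + 1/2 + 1 = k + 3/2 by ring, ← integral_pow_two_mul_mul_dunklWeight hk] at h

theorem integrable_dunklTerm_mul_dunklWeight (hk : -1/2 < k) (y : ℝ) (n : ℕ) :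
    Integrable fun x => dunklTerm k x y n * dunklWeight k x := by
  simp_rw [dunklTerm_mul_dunklWeight]
  exact ((integrable_pow_mul_dunklWeight hk _).const_mul _).add
    ((integrable_pow_mul_dunklWeight hk _).const_mul _)

theorem integral_dunklTerm_mul_dunklWeight (hk : -1/2 < k) (y : ℝ) (n : ℕ) :
    ∫ x, dunklTerm k x y n * dunklWeight k x
      = 2 ^ (k + 1/2) * Gamma (k + 1/2) * ((y ^ 2 / 2) ^ n / n.factorial) := by
  simp_rw [dunklTerm_mul_dunklWeight]
  rw [integral_add ((integrable_pow_mul_dunklWeight hk _).const_mul _)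
      ((integrable_pow_mul_dunklWeight hk _).const_mul _),
    integral_const_mul, integral_const_mul, integral_pow_two_mul_add_one_mul_dunklWeight,
    mul_zero, add_zero]
  exact besselTerm_sub_half_mul_integral_pow_two_mul_mul_dunklWeight hk y n

theorem norm_dunklTerm_mul_dunklWeight_le (hk : -1/2 < k) (x y : ℝ) (n : ℕ) :
    ‖dunklTerm k x y n * dunklWeight k x‖
      ≤ besselTerm (k - 1/2) y n * (x ^ (2 * n) * dunklWeight k x)
        + |y| / (2 * k + 1) * besselTerm (k + 1/2) y n
          * (dunklWeight k x + x ^ (2 * (n + 1)) * dunklWeight k x) := by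
  have hw := dunklWeight_nonneg k x
  have ha := besselTerm_nonneg (α := k - 1/2) (by linarith) y n
  have hb := besselTerm_nonneg (α := k + 1/2) (by linarith) y n
  have h2k : 0 < 2 * k + 1 := by linarith
  have hodd : |x ^ (2 * n + 1)| ≤ 1 + x ^ (2 * (n + 1)) := by
    rw [abs_pow, ← (even_two_mul (n + 1)).pow_abs]
    exact pow_le_one_add_pow_succ (abs_nonneg x) _
  have hcoeff : |besselTerm (k - 1/2) y n * x ^ (2 * n)
      + y / (2 * k + 1) * besselTerm (k + 1/2) y n * x ^ (2 * n + 1)|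
      ≤ besselTerm (k - 1/2) y n * x ^ (2 * n)
        + |y| / (2 * k + 1) * besselTerm (k + 1/2) y n * (1 + x ^ (2 * (n + 1))) := by
    refine (abs_add_le _ _).trans (add_le_add ?_ ?_)
    · rw [abs_mul, abs_of_nonneg ha, abs_of_nonneg ((even_two_mul n).pow_nonneg x)]
    · rw [abs_mul, abs_mul, abs_div, abs_of_pos h2k, abs_of_nonneg hb]
      gcongr
  rw [dunklTerm_eq, norm_mul, norm_of_nonneg hw, norm_eq_abs]
  exact (mul_le_mul_of_nonneg_right hcoeff hw).trans_eq (by ring)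

theorem summable_integral_norm_dunklTerm_mul_dunklWeight (hk : -1/2 < k) (y : ℝ) :
    Summable fun n => ∫ x, ‖dunklTerm k x y n * dunklWeight k x‖ := by
  have hint := integrable_pow_mul_dunklWeight hk
  have hw : Integrable (dunklWeight k) := by simpa using hint 0
  set A := besselTerm (k - 1/2) y
  set B := fun n => |y| / (2 * k + 1) * besselTerm (k + 1/2) y n
  set M := fun m : ℕ => ∫ x, x ^ (2 * m) * dunklWeight k x
  have hM0 : ∫ x, dunklWeight k x = M 0 := by simp [M]
  have hw' : ∀ n, Integrable fun x => dunklWeight k x + x ^ (2 * (n + 1)) * dunklWeight k x :=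
    fun n => hw.add (hint _)
  have hbound : ∀ n, ∫ x, (A n * (x ^ (2 * n) * dunklWeight k x)
      + B n * (dunklWeight k x + x ^ (2 * (n + 1)) * dunklWeight k x))
      = A n * M n + (B n * M 0 + B n * M (n + 1)) := by
    intro n
    rw [integral_add ((hint _).const_mul _) ((hw' n).const_mul _), integral_const_mul,
      integral_const_mul, integral_add hw (hint _), hM0, mul_add]
  refine Summable.of_nonneg_of_le (fun n => integral_nonneg fun _ => norm_nonneg _)
    (fun n => (integral_mono (integrable_dunklTerm_mul_dunklWeight hk y n).norm
      (((hint _).const_mul _).add ((hw' n).const_mul _))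
      (norm_dunklTerm_mul_dunklWeight_le hk · y n)).trans_eq (hbound n)) ?_
  have hexp := summable_pow_div_factorial (y ^ 2 / 2)
  have hAM : Summable fun n => A n * M n := (hexp.mul_left _).congr fun n =>
    (besselTerm_sub_half_mul_integral_pow_two_mul_mul_dunklWeight hk y n).symm
  have hBM : Summable fun n => B n * M (n + 1) :=
    (hexp.mul_left (|y| / (2 * k + 1) * (2 ^ (k + 3/2) * Gamma (k + 3/2)))).congr fun n => by
    simp only [B, M, mul_assoc,
      besselTerm_add_half_mul_integral_pow_two_mul_succ_mul_dunklWeight hk y n]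
  have hB : Summable B := (summable_besselTerm (by linarith) y).mul_left _
  exact hAM.add ((hB.mul_right (M 0)).add hBM)

theorem hasSum_integral_dunklTerm_mul_dunklWeight (hk : -1/2 < k) (y : ℝ) :
    HasSum (fun n => ∫ x, dunklTerm k x y n * dunklWeight k x)
      (∫ x, dunklKernel k x y * dunklWeight k x) := by
  have h := hasSum_integral_of_summable_integral_norm (integrable_dunklTerm_mul_dunklWeight hk y)
    (summable_integral_norm_dunklTerm_mul_dunklWeight hk y)
  simpa only [tsum_mul_right, (hasSum_dunklTerm hk _ y).tsum_eq] using h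

end DunklTerm

/-- Gaussian integral identity for the rank-one Dunkl kernel:
`∫_ℝ E_k(x,y) e^{-x²/2} |x|^{2k} dx = 2^{k+1/2} c_k⁻¹ e^{y²/2}`. -/
theorem dunkl_kernel_gaussian_integral (k : ℝ) (hk : 0 ≤ k) (y : ℝ) :
    ∫ x : ℝ, dunklKernel k x y * Real.exp (-x ^ 2 / 2) * |x| ^ (2 * k)
      = (2 : ℝ) ^ (k + 1/2) * (ck k)⁻¹ * Real.exp (y ^ 2 / 2) := by
  have hk' : -1/2 < k := by linarith
  have h := hasSum_integral_dunklTerm_mul_dunklWeight hk' y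
  simp only [integral_dunklTerm_mul_dunklWeight hk'] at h
  have hexp := (NormedSpace.expSeries_div_hasSum_exp (y ^ 2 / 2)).mul_left
    (2 ^ (k + 1/2) * Gamma (k + 1/2))
  rw [← exp_eq_exp_ℝ] at hexp
  simp only [dunklWeight, ← mul_assoc] at h
  rw [h.unique hexp, inv_ck hk']
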